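/- arXiv:1607.04756 — 2 statements merged into one kernel-verified Lean document; each statement's English description precedes it below -/
import Mathlib

section
/- Suppose every family of ω₁-many functions from ω to ω admits a single function eventually dominating all of them (i.e., the bounding number 𝔟 exceeds ω₁). Let X be a set and {U_β : β < ω₁} any family of subsets of X. Then the collection I = { a ⊆ X : a is countable and a ∩ U_β is finite for every β < ω₁ } is a P-ideal: I is closed under subsets and finite unions, and for every countable collection {a_n : n ∈ ω} ⊆ I there exists J ∈ I with a_n ∖ J finite for all n. -/
theorem aux_aleph1_lift_eq.{u, v} :
    Ordinal.lift.{v, u} (Cardinal.aleph.{u} 1).ord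
      = Ordinal.lift.{u, v} (Cardinal.aleph.{v} 1).ord := by
  rw [Cardinal.lift_ord, Cardinal.lift_ord, Cardinal.lift_aleph, Cardinal.lift_aleph,
    Ordinal.lift_one, Ordinal.lift_one]

theorem aux_exists_surj.{u, v} :
    ∃ s : Set.Iio (Cardinal.aleph.{u} 1).ord → Set.Iio (Cardinal.aleph.{v} 1).ord,
      Function.Surjective s := by
  have key : ∀ a : Set.Iio (Cardinal.aleph.{u} 1).ord,
      ∃ b : Set.Iio (Cardinal.aleph.{v} 1).ord,
        Ordinal.lift.{u} b.1 = Ordinal.lift.{v} a.1 := by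
    intro a
    have h : Ordinal.lift.{v} a.1 < Ordinal.lift.{u} (Cardinal.aleph.{v} 1).ord := by
      rw [← aux_aleph1_lift_eq]
      exact Ordinal.lift_lt.mpr a.2
    obtain ⟨b, hblt, hbe⟩ := Ordinal.lt_lift_iff.mp h
    exact ⟨⟨b, hblt⟩, hbe⟩
  choose s hs using key
  refine ⟨s, fun b => ?_⟩
  have h : Ordinal.lift.{u} b.1 < Ordinal.lift.{v} (Cardinal.aleph.{u} 1).ord := by
    rw [aux_aleph1_lift_eq]
    exact Ordinal.lift_lt.mpr b.2
  obtain ⟨a, halt, hae⟩ := Ordinal.lt_lift_iff.mp h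
  refine ⟨⟨a, halt⟩, Subtype.ext (Ordinal.lift_inj.mp ?_)⟩
  rw [hs ⟨a, halt⟩, hae]

theorem stmt_10 {X : Type*}
    (hb : ∀ f : Set.Iio (Cardinal.aleph 1).ord → ℕ → ℕ,
      ∃ g : ℕ → ℕ, ∀ i, ∀ᶠ n in Filter.atTop, f i n ≤ g n)
    (U : Set.Iio (Cardinal.aleph 1).ord → Set X) :
    ∀ I : Set (Set X), I = {A | A.Countable ∧ ∀ β, (A ∩ U β).Finite} →
      (∀ A ∈ I, ∀ B ⊆ A, B ∈ I) ∧
      (∀ A ∈ I, ∀ B ∈ I, A ∪ B ∈ I) ∧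
      (∀ a : ℕ → Set X, (∀ n, a n ∈ I) → ∃ J ∈ I, ∀ n, (a n \ J).Finite) := by
  intro I hI
  subst hI
  refine ⟨?_, ?_, ?_⟩
  · rintro A ⟨hc, hf⟩ B hB
    exact ⟨hc.mono hB, fun β => (hf β).subset (Set.inter_subset_inter_left _ hB)⟩
  · rintro A ⟨hAc, hAf⟩ B ⟨hBc, hBf⟩
    refine ⟨hAc.union hBc, fun β => ?_⟩
    rw [Set.union_inter_distrib_right]
    exact (hAf β).union (hBf β)
  · intro a ha
    classical
    set A : Set X := ⋃ n, a n with hA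
    have hAc : A.Countable := Set.countable_iUnion fun n => (ha n).1
    obtain ⟨e, he⟩ := Set.countable_iff_exists_injective.mp hAc
    set E : X → ℕ := fun x => if h : x ∈ A then e ⟨x, h⟩ else 0 with hE
    set b : ℕ → Set X := fun n => ⋃ k ∈ Finset.range (n + 1), a k with hbdef
    have hfin : ∀ (β) (n : ℕ), (b n ∩ U β).Finite := by
      intro β n
      have hrw : b n ∩ U β = ⋃ k ∈ Finset.range (n + 1), (a k ∩ U β) := by
        simp [hbdef, Set.iUnion_inter]
      rw [hrw]
      exact Set.Finite.biUnion (Finset.range (n + 1)).finite_toSet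
        fun k _ => (ha k).2 β
    obtain ⟨s, hsurj⟩ := aux_exists_surj
    obtain ⟨g, hg'⟩ := hb (fun i n => (hfin (s i) n).toFinset.sup E)
    have hg : ∀ β, ∀ᶠ n in Filter.atTop, (hfin β n).toFinset.sup E ≤ g n := by
      intro β
      obtain ⟨i, rfl⟩ := hsurj β
      exact hg' i
    set J : Set X := {x | ∃ h : ∃ n, x ∈ a n, g (Nat.find h) < E x} with hJ
    have hJA : J ⊆ A := fun x hx => Set.mem_iUnion.mpr ⟨Nat.find hx.1, Nat.find_spec hx.1⟩
    refine ⟨J, ⟨hAc.mono hJA, ?_⟩, ?_⟩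
    · intro β
      obtain ⟨N, hN⟩ := Filter.eventually_atTop.mp (hg β)
      apply (hfin β N).subset
      rintro x ⟨⟨h, hgx⟩, hxU⟩
      by_cases hle : Nat.find h ≤ N
      · refine ⟨?_, hxU⟩
        simp only [hbdef, Set.mem_iUnion]
        exact ⟨Nat.find h, by simp only [Finset.mem_range]; omega, Nat.find_spec h⟩
      · exfalso
        push_neg at hle
        have hxb : x ∈ b (Nat.find h) ∩ U β := by
          refine ⟨?_, hxU⟩
          simp only [hbdef, Set.mem_iUnion]
          exact ⟨Nat.find h, by simp, Nat.find_spec h⟩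
        have h1 : E x ≤ (hfin β (Nat.find h)).toFinset.sup E :=
          Finset.le_sup ((hfin β (Nat.find h)).mem_toFinset.mpr hxb)
        have h2 := hN (Nat.find h) (le_of_lt hle)
        omega
    · intro n
      set M : ℕ := (Finset.range (n + 1)).sup g with hM
      have hsub : a n \ J ⊆ Subtype.val '' (e ⁻¹' Set.Iic M) := by
        intro x hx
        have hxA : x ∈ A := Set.mem_iUnion.mpr ⟨n, hx.1⟩
        have hex : ∃ m, x ∈ a m := ⟨n, hx.1⟩
        have hnJ : ¬ (g (Nat.find hex) < E x) := fun hc => hx.2 ⟨hex, hc⟩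
        push_neg at hnJ
        have hfl : Nat.find hex ≤ n := Nat.find_le hx.1
        have hEM : E x ≤ M :=
          le_trans hnJ (Finset.le_sup (Finset.mem_range.mpr (by omega)))
        refine ⟨⟨x, hxA⟩, ?_, rfl⟩
        simp only [Set.mem_preimage, Set.mem_Iic]
        have hEx : E x = e ⟨x, hxA⟩ := by simp [hE, hxA]
        omega
      exact (((Set.finite_Iic M).preimage he.injOn).image _).subset hsub
end

section
/- Let X be a regular sequentially compact space that is not compact. Then either (a) X has a countable subset whose closure is not compact, or (b) there exist a subset E ⊆ X of cardinality ℵ₁ and an open set W ⊆ X such that the closure of every countable subset of E is contained in W, yet E has no complete accumulation point in W (i.e., no point of W has the property that every neighborhood of it contains ℵ₁-many points of E). -/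
/-!
Take an open cover of `X` without finite subcover. If closures of countable sets are compact,
each of them is covered by a finite subfamily, and by countable compactness no countably many of
these finite unions cover `X`. By transfinite recursion pick `x a` for `a < ω₁` outside the union
`V a` of the finite unions chosen for the closures of the initial segments `{x q | q < b}`,
`b ≤ a`. Then `E = {x a}` and `W = ⋃ V a` work: a countable subset of `E` lies in an initial
segment, and the neighbourhood `V a` meets `E` only in the countable set `{x q | q ≤ a}`.
-/

open Set
open scoped Cardinal Ordinal Topology

universe u

lemma mk_lt_aleph_one_iff_countable {α : Type u} {s : Set α} : #s < ℵ₁ ↔ s.Countable :=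
  Cardinal.lt_aleph_one_iff.trans Cardinal.le_aleph0_iff_set_countable

lemma countable_Iio_omegaOne (a : (ω₁ : Ordinal.{u}).ToType) : (Iio a).Countable :=
  mk_lt_aleph_one_iff_countable.1 (by simpa using Cardinal.mk_Iio_lt a)

lemma countable_Iic_omegaOne (a : (ω₁ : Ordinal.{u}).ToType) : (Iic a).Countable :=
  mk_lt_aleph_one_iff_countable.1 (by simpa using Cardinal.mk_Iic_lt a)

lemma exists_forall_lt_of_countable_omegaOne {s : Set (ω₁ : Ordinal.{u}).ToType}
    (hs : s.Countable) : ∃ a, ∀ q ∈ s, q < a := by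
  refine not_isCofinal_iff.1 fun hcof => (Order.cof_le hcof).not_gt ?_
  rw [Ordinal.cof_toType, Cardinal.cof_omega_one]
  exact mk_lt_aleph_one_iff_countable.2 hs

section AvoidSeq

variable {X : Type*} [Nonempty X] {α : Type*} [LinearOrder α] [WellFoundedLT α]

/-- A point outside `avoidSet G a` whenever there is one, see `avoidSeq_notMem_avoidSet`. -/
noncomputable def avoidSeq (G : Set X → Set X) : α → X :=
  wellFounded_lt.fix fun a x => Classical.epsilon fun y =>
    y ∉ ⋃ b ∈ Iic a, G (range fun q : Iio b => x q (lt_of_lt_of_le q.2 ‹b ∈ Iic a›))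

def avoidSet (G : Set X → Set X) (a : α) : Set X :=
  ⋃ b ∈ Iic a, G (avoidSeq G '' Iio b)

lemma avoidSeq_eq (G : Set X → Set X) (a : α) :
    avoidSeq G a = Classical.epsilon (· ∉ avoidSet G a) := by
  rw [avoidSeq, WellFounded.fix_eq]
  simp only [avoidSet, image_eq_range]
  rfl

lemma avoidSeq_notMem_avoidSet {G : Set X → Set X} {a : α} (h : avoidSet G a ≠ univ) :
    avoidSeq G a ∉ avoidSet G a := by
  rw [avoidSeq_eq]
  exact Classical.epsilon_spec ((ne_univ_iff_exists_notMem _).1 h)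

lemma avoidSet_mono (G : Set X → Set X) : Monotone (avoidSet (α := α) G) :=
  fun _ _ hab => biUnion_mono (Iic_subset_Iic.2 hab) fun _ _ => subset_rfl

lemma subset_avoidSet (G : Set X → Set X) (a : α) : G (avoidSeq G '' Iio a) ⊆ avoidSet G a :=
  subset_biUnion_of_mem (u := fun b => G (avoidSeq G '' Iio b)) self_mem_Iic

end AvoidSeq

theorem exists_countable_closure_nbhd_not_cover {X : Type u}
    [TopologicalSpace X] [CountablyCompactSpace X] (hnc : ¬ CompactSpace X)
    (hcl : ∀ s : Set X, s.Countable → IsCompact (closure s)) :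
    ∃ O : Set X → Set X, (∀ s, IsOpen (O s)) ∧ (∀ s, s.Countable → closure s ⊆ O s) ∧
      ∀ S : Set (Set X), S.Countable → ⋃ s ∈ S, O s ≠ univ := by
  obtain ⟨ι, U, hUo, hUcov, hUfin⟩ : ∃ (ι : Type u) (U : ι → Set X), (∀ i, IsOpen (U i)) ∧
      univ ⊆ ⋃ i, U i ∧ ∀ t : Finset ι, ¬ univ ⊆ ⋃ i ∈ t, U i := by
    simpa [← isCompact_univ_iff, isCompact_iff_finite_subcover] using hnc
  choose! t ht using fun s (hs : s.Countable) =>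
    (hcl s hs).elim_finite_subcover U hUo ((subset_univ _).trans hUcov)
  refine ⟨fun s => ⋃ i ∈ t s, U i, fun s => isOpen_biUnion fun i _ => hUo i, ht,
    fun S hS hSU => ?_⟩
  obtain ⟨t', -, ht'fin, ht'⟩ :=
    CountablyCompactSpace.isCountablyCompact_univ.elim_finite_subcover_image
      (hS.biUnion fun s _ => (t s).countable_toSet) (fun i _ => hUo i)
      (by rw [← hSU, biUnion_iUnion]; simp)
  exact hUfin ht'fin.toFinset (by simpa using ht')

theorem exists_aleph_one_set_without_complete_accPt {X : Type u} [TopologicalSpace X]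
    (O : Set X → Set X) (hO : ∀ s, IsOpen (O s)) (hclosure : ∀ s, s.Countable → closure s ⊆ O s)
    (hcover : ∀ S : Set (Set X), S.Countable → ⋃ s ∈ S, O s ≠ univ) :
    ∃ E W : Set X, #E = ℵ₁ ∧ IsOpen W ∧ (∀ c ⊆ E, c.Countable → closure c ⊆ W) ∧
      ∀ x ∈ W, ¬ ∀ V ∈ 𝓝 x, ℵ₁ ≤ #↥(V ∩ E) := by
  have : Nonempty X := by
    obtain ⟨z, -⟩ := (ne_univ_iff_exists_notMem _).1 (hcover ∅ countable_empty)
    exact ⟨z⟩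
  set x : (ω₁ : Ordinal.{u}).ToType → X := avoidSeq O
  set V : (ω₁ : Ordinal.{u}).ToType → Set X := avoidSet O
  have hVo : ∀ a, IsOpen (V a) := fun a => isOpen_biUnion fun b _ => hO _
  have hx : ∀ a, x a ∉ V a := fun a => avoidSeq_notMem_avoidSet <| by
    rw [avoidSet, ← biUnion_image (f := fun b => avoidSeq O '' Iio b) (g := O)]
    exact hcover _ ((countable_Iic_omegaOne a).image _)
  have hclV : ∀ a, closure (x '' Iio a) ⊆ V a := fun a =>
    (hclosure _ ((countable_Iio_omegaOne a).image x)).trans (subset_avoidSet O a)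
  have hlt : ∀ {q a}, q < a → x q ∈ V a := fun hqa =>
    hclV _ (subset_closure (mem_image_of_mem x hqa))
  have hle : ∀ {q a}, x q ∈ V a → q ≤ a := fun h =>
    not_lt.1 fun haq => hx _ (avoidSet_mono O haq.le h)
  have hinj : Function.Injective x := .of_lt_imp_ne fun q a hqa h => hx a (h ▸ hlt hqa)
  refine ⟨range x, ⋃ a, V a, by simp [Cardinal.mk_range_eq x hinj], isOpen_iUnion hVo, ?_, ?_⟩
  · intro c hcE hc
    obtain ⟨a, ha⟩ := exists_forall_lt_of_countable_omegaOne (hc.preimage_of_injOn hinj.injOn)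
    have hca : c ⊆ x '' Iio a := fun y hy => by
      obtain ⟨q, rfl⟩ := hcE hy
      exact mem_image_of_mem x (ha q hy)
    exact (closure_mono hca).trans ((hclV a).trans (subset_iUnion V a))
  · intro z hz hacc
    obtain ⟨a, ha⟩ := mem_iUnion.1 hz
    have hVa : V a ∩ range x ⊆ x '' Iic a := by
      rintro _ ⟨hV, q, rfl⟩
      exact mem_image_of_mem x (hle hV)
    have hcount := ((countable_Iic_omegaOne a).image x).mono hVa
    exact (hacc _ ((hVo a).mem_nhds ha)).not_gt (mk_lt_aleph_one_iff_countable.2 hcount)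

theorem stmt_11_general {X : Type*} [TopologicalSpace X]
    [SeqCompactSpace X] (hnc : ¬ CompactSpace X) :
    (∃ c : Set X, c.Countable ∧ ¬ IsCompact (closure c)) ∨
    (∃ (E W : Set X), Cardinal.mk E = Cardinal.aleph 1 ∧ IsOpen W ∧
      (∀ c ⊆ E, c.Countable → closure c ⊆ W) ∧
      ∀ x ∈ W, ¬ (∀ V ∈ nhds x, Cardinal.aleph 1 ≤ Cardinal.mk ↥(V ∩ E))) := by
  refine or_iff_not_imp_left.2 fun hcl => ?_
  push Not at hcl
  obtain ⟨O, hO, hclosure, hcover⟩ := exists_countable_closure_nbhd_not_cover hnc hcl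
  exact exists_aleph_one_set_without_complete_accPt O hO hclosure hcover

theorem stmt_11 {X : Type*} [TopologicalSpace X] [RegularSpace X]
    [SeqCompactSpace X] (hnc : ¬ CompactSpace X) :
    (∃ c : Set X, c.Countable ∧ ¬ IsCompact (closure c)) ∨
    (∃ (E W : Set X), Cardinal.mk E = Cardinal.aleph 1 ∧ IsOpen W ∧
      (∀ c ⊆ E, c.Countable → closure c ⊆ W) ∧
      ∀ x ∈ W, ¬ (∀ V ∈ nhds x, Cardinal.aleph 1 ≤ Cardinal.mk ↥(V ∩ E))) :=
  stmt_11_general hnc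
end
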